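/- Let S be a numerical semigroup whose left elements have greatest common divisor 1. Then T = ⟨L(S)⟩ is a numerical semigroup and T is a descendant of S (or equal to S). -/

import Mathlib

/-- A numerical semigroup: a cofinite additive submonoid of ℕ containing 0. -/
def IsNumericalSemigroup (S : Set ℕ) : Prop :=
  0 ∈ S ∧ (∀ a ∈ S, ∀ b ∈ S, a + b ∈ S) ∧ Sᶜ.Finite

/-- The nsConductor: least `c` such that every `n ≥ c` belongs to `S`. -/
noncomputable def nsConductor (S : Set ℕ) : ℕ :=
  sInf {c : ℕ | ∀ n : ℕ, c ≤ n → n ∈ S}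

/-- The genus: number of gaps. -/
noncomputable def genus (S : Set ℕ) : ℕ := Sᶜ.ncard

/-- The Frobenius number: largest integer not in `S` (for `S ≠ ℕ`). -/
noncomputable def nsFrobenius (S : Set ℕ) : ℕ := sSup Sᶜ

/-- The multiplicity: least positive element of `S`. -/
noncomputable def mult (S : Set ℕ) : ℕ := sInf {n : ℕ | n ∈ S ∧ n ≠ 0}

/-- `p` is a minimal generator (primitive) of `S`: nonzero element of `S` that is
not a sum of two nonzero elements of `S`. -/
def IsPrimitive (S : Set ℕ) (p : ℕ) : Prop :=
  p ∈ S ∧ p ≠ 0 ∧ ∀ a ∈ S, ∀ b ∈ S, a ≠ 0 → b ≠ 0 → a + b ≠ p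

/-- The set of minimal generators of `S`. -/
def primitives (S : Set ℕ) : Set ℕ := {p | IsPrimitive S p}

/-- The embedding dimension: number of minimal generators. -/
noncomputable def edim (S : Set ℕ) : ℕ := (primitives S).ncard

/-- The left elements: elements of `S` strictly below the nsConductor. -/
def lefts (S : Set ℕ) : Set ℕ := {s ∈ S | s < nsConductor S}

/-- The additive submonoid of ℕ generated by a set, viewed as a set. -/
def genBy (X : Set ℕ) : Set ℕ := (AddSubmonoid.closure X : Set ℕ)

/-- `T` is a child of `S`: obtained by removing one big primitive. -/
def ChildOf (S T : Set ℕ) : Prop :=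
  ∃ p : ℕ, IsPrimitive S p ∧ nsConductor S ≤ p ∧ T = S \ {p}

/-- `T` is a descendant of `S` (possibly `T = S`): obtained by finitely many
removals of big primitives. -/
def DescendantOf (S T : Set ℕ) : Prop :=
  Relation.ReflTransGen (fun A B => ChildOf A B) S T

/-- The gcd of the set `X` equals `1`: the only common divisor of all elements is `1`. -/
def SetGcdOne (X : Set ℕ) : Prop :=
  ∀ d : ℕ, (∀ x ∈ X, d ∣ x) → d = 1


/-! The left elements generate a submonoid `T ⊆ S` that contains every element of `S` below the
conductor, and gcd one makes `T` cofinite. The least element `p` of `S \ T` is then a minimal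
generator of `S` with `p ≥ c(S)`; removing it keeps `T` inside, makes the new conductor at most
`p + 1`, and shrinks `S \ T`, so finitely many such removals lead from `S` to `T`. -/

lemma SetGcdOne.setGcd_eq_one {X : Set ℕ} (h : SetGcdOne X) : Nat.setGcd X = 1 :=
  h _ fun _ => Nat.setGcd_dvd_of_mem

lemma finite_compl_genBy {X : Set ℕ} (h : SetGcdOne X) : (genBy X)ᶜ.Finite := by
  obtain ⟨n, hn⟩ := Nat.exists_mem_closure_of_ge X
  refine (Set.finite_Iio n).subset fun m hm => ?_
  by_contra hnm
  exact hm (hn m (not_lt.mp hnm) (h.setGcd_eq_one ▸ one_dvd m))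

lemma isNumericalSemigroup_genBy {X : Set ℕ} (h : SetGcdOne X) :
    IsNumericalSemigroup (genBy X) :=
  ⟨zero_mem _, fun _ ha _ hb => add_mem ha hb, finite_compl_genBy h⟩

lemma genBy_subset {S X : Set ℕ} (hS : IsNumericalSemigroup S) (hXS : X ⊆ S) : genBy X ⊆ S :=
  fun _ hx => AddSubmonoid.closure_induction (fun _ hy => hXS hy) hS.1
    (fun _ _ _ _ ha hb => hS.2.1 _ ha _ hb) hx

lemma mem_of_nsConductor_le {S : Set ℕ} (hS : Sᶜ.Finite) {n : ℕ} (hn : nsConductor S ≤ n) :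
    n ∈ S := by
  have hne : {c : ℕ | ∀ n : ℕ, c ≤ n → n ∈ S}.Nonempty := by
    obtain ⟨b, hb⟩ := hS.bddAbove
    exact ⟨b + 1, fun n hn => by_contra fun hnS => by have := hb hnS; omega⟩
  exact Nat.sInf_mem hne n hn

lemma nsConductor_le {S : Set ℕ} {c : ℕ} (h : ∀ n, c ≤ n → n ∈ S) : nsConductor S ≤ c :=
  Nat.sInf_le h

lemma IsNumericalSemigroup.diff_singleton {S : Set ℕ} {p : ℕ} (hS : IsNumericalSemigroup S)
    (hp : IsPrimitive S p) : IsNumericalSemigroup (S \ {p}) := by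
  obtain ⟨hpS, hp0, hpirr⟩ := hp
  refine ⟨⟨hS.1, Ne.symm hp0⟩, fun a ⟨ha, hap⟩ b ⟨hb, hbp⟩ => ⟨hS.2.1 a ha b hb, ?_⟩, ?_⟩
  · rcases Nat.eq_zero_or_pos a with rfl | ha0
    · simpa using hbp
    rcases Nat.eq_zero_or_pos b with rfl | hb0
    · simpa using hap
    exact hpirr a ha b hb ha0.ne' hb0.ne'
  · rw [Set.compl_sdiff]
    exact (Set.finite_singleton p).union hS.2.2

lemma nsConductor_diff_singleton_le {S : Set ℕ} (hS : Sᶜ.Finite) {p : ℕ}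
    (hp : nsConductor S ≤ p) : nsConductor (S \ {p}) ≤ p + 1 :=
  nsConductor_le fun n hn =>
    ⟨mem_of_nsConductor_le hS (by omega), Set.notMem_singleton_iff.mpr (by omega)⟩

lemma isPrimitive_sInf_diff {S T : Set ℕ} (hT : IsNumericalSemigroup T) (hne : (S \ T).Nonempty) :
    IsPrimitive S (sInf (S \ T)) := by
  obtain ⟨hpS, hpT⟩ := Nat.sInf_mem hne
  have mem_T {a} (ha : a ∈ S) (hlt : a < sInf (S \ T)) : a ∈ T :=
    by_contra fun haT => (Nat.sInf_le (show a ∈ S \ T from ⟨ha, haT⟩)).not_gt hlt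
  refine ⟨hpS, fun h0 => hpT (h0 ▸ hT.1), fun a ha b hb ha0 hb0 hab => hpT ?_⟩
  rw [← hab]
  exact hT.2.1 a (mem_T ha (by omega)) b (mem_T hb (by omega))

theorem DescendantOf.of_subset {S T : Set ℕ} (hS : IsNumericalSemigroup S)
    (hT : IsNumericalSemigroup T) (hTS : T ⊆ S) (hlarge : ∀ s ∈ S \ T, nsConductor S ≤ s) :
    DescendantOf S T := by
  obtain ⟨n, hn⟩ : ∃ n, (S \ T).ncard = n := ⟨_, rfl⟩
  induction n generalizing S with
  | zero =>
    have hST : S \ T = ∅ :=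
      (Set.ncard_eq_zero (hT.2.2.subset fun _ hx => hx.2)).mp hn
    rw [(Set.sdiff_eq_empty.mp hST).antisymm hTS]
    exact .refl
  | succ n ih =>
    have hne : (S \ T).Nonempty := Set.nonempty_of_ncard_ne_zero (by omega)
    set p := sInf (S \ T)
    have hpST : p ∈ S \ T := Nat.sInf_mem hne
    have hprim : IsPrimitive S p := isPrimitive_sInf_diff hT hne
    have hcp : nsConductor S ≤ p := hlarge p hpST
    have hTS' : T ⊆ S \ {p} := fun t ht => ⟨hTS ht, fun htp => hpST.2 (htp ▸ ht)⟩
    have hlarge' : ∀ s ∈ (S \ {p}) \ T, nsConductor (S \ {p}) ≤ s := by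
      rintro s ⟨⟨hs, hsp⟩, hsT⟩
      have : p ≤ s := Nat.sInf_le ⟨hs, hsT⟩
      have : s ≠ p := hsp
      have := nsConductor_diff_singleton_le hS.2.2 hcp
      omega
    have hn' : ((S \ {p}) \ T).ncard = n := by
      rw [Set.sdiff_sdiff_comm, Set.ncard_sdiff_singleton_of_mem hpST, hn, Nat.add_sub_cancel]
    exact .head ⟨p, hprim, hcp, rfl⟩ (ih (hS.diff_singleton hprim) hTS' hlarge' hn')

theorem stmt10 (S : Set ℕ) (hS : IsNumericalSemigroup S) (hgcd : SetGcdOne (lefts S)) :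
    IsNumericalSemigroup (genBy (lefts S)) ∧ DescendantOf S (genBy (lefts S)) := by
  have hT := isNumericalSemigroup_genBy hgcd
  refine ⟨hT, DescendantOf.of_subset hS hT (genBy_subset hS fun _ hs => hs.1) ?_⟩
  rintro s ⟨hs, hsT⟩
  by_contra hlt
  exact hsT (AddSubmonoid.subset_closure ⟨hs, not_le.mp hlt⟩)
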